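/- arXiv:1610.04101 — 4 statements merged into one kernel-verified Lean document; each statement's English description precedes it below -/
import Mathlib

section
/- Let (M, τ) be a tracial W*-probability space with τ faithful, u ∈ M a unitary, N ⊆ M a unital von Neumann subalgebra, and E : M → N the unique τ-preserving conditional expectation. If u is *-freely independent of N, then for every x ∈ N one has E(u x u*) = τ(x)·1 + |τ(u)|² · (x − τ(x)·1). -/
/-- Free independence (in the sense of Voiculescu) of two subalgebras with respect
to a trace: alternating products of centered elements have zero trace. -/
def FreeIndep {M : Type*} [Ring M] [Algebra ℂ M] (τ : M →ₗ[ℂ] ℂ)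
    (A B : Subalgebra ℂ M) : Prop :=
  ∀ (k : ℕ) (x : Fin k → M) (ι : Fin k → Bool), 0 < k →
    (∀ j, if ι j then x j ∈ A else x j ∈ B) →
    (∀ j, τ (x j) = 0) →
    (∀ j : Fin k, ∀ h : (j : ℕ) + 1 < k, ι j ≠ ι ⟨(j : ℕ) + 1, h⟩) →
    τ (List.ofFn x).prod = 0

section Helpers
variable {M : Type*} [Ring M] [Algebra ℂ M] {τ : M →ₗ[ℂ] ℂ} {A B : Subalgebra ℂ M}

lemma freeTwo (h : FreeIndep τ A B) {a b : M} (ha : a ∈ A) (hb : b ∈ B)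
    (ha0 : τ a = 0) (hb0 : τ b = 0) : τ (a * b) = 0 := by
  have := h 2 ![a, b] ![true, false] (by norm_num)
    (by intro j; fin_cases j <;> simpa)
    (by intro j; fin_cases j <;> simpa)
    (by decide)
  simpa [List.ofFn_succ] using this

lemma freeThree (h : FreeIndep τ A B) {a b c : M} (ha : a ∈ B) (hb : b ∈ A) (hc : c ∈ B)
    (ha0 : τ a = 0) (hb0 : τ b = 0) (hc0 : τ c = 0) : τ (a * b * c) = 0 := by
  have := h 3 ![a, b, c] ![false, true, false] (by norm_num)
    (by intro j; fin_cases j <;> simpa)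
    (by intro j; fin_cases j <;> simpa)
    (by decide)
  simpa [List.ofFn_succ, mul_assoc] using this

lemma freeFour (h : FreeIndep τ A B) {a b c d : M} (ha : a ∈ A) (hb : b ∈ B) (hc : c ∈ A)
    (hd : d ∈ B) (ha0 : τ a = 0) (hb0 : τ b = 0) (hc0 : τ c = 0) (hd0 : τ d = 0) :
    τ (a * b * c * d) = 0 := by
  have := h 4 ![a, b, c, d] ![true, false, true, false] (by norm_num)
    (by intro j; fin_cases j <;> simpa)
    (by intro j; fin_cases j <;> simpa)
    (by decide)
  simpa [List.ofFn_succ, mul_assoc] using this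

end Helpers

/-- In a tracial W*-probability space with faithful trace τ, if a unitary u is
*-freely independent of a unital subalgebra N with τ-preserving conditional
expectation E onto N, then E(u x u*) = τ(x)·1 + |τ(u)|²·(x − τ(x)·1) for x ∈ N. -/
theorem condExp_unitary_conjugation
    {M : Type*} [Ring M] [Algebra ℂ M] [StarRing M] [StarModule ℂ M]
    (τ : M →ₗ[ℂ] ℂ)
    (hτ1 : τ 1 = 1) (htr : ∀ a b : M, τ (a * b) = τ (b * a))
    (hpos : ∀ a : M, 0 ≤ (τ (star a * a)).re ∧ (τ (star a * a)).im = 0)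
    (hfaithful : ∀ a : M, τ (star a * a) = 0 → a = 0)
    (N : StarSubalgebra ℂ M)
    (u : M) (hu : star u * u = 1) (hu' : u * star u = 1)
    (hfree : FreeIndep τ (StarAlgebra.adjoin ℂ {u}).toSubalgebra N.toSubalgebra)
    (E : M →ₗ[ℂ] M) (hEmem : ∀ m, E m ∈ N)
    (hEcond : ∀ m : M, ∀ y ∈ N, τ (E m * y) = τ (m * y))
    (x : M) (hx : x ∈ N) :
    E (u * x * star u) =
      algebraMap ℂ M (τ x) +
        ((‖τ u‖ ^ 2 : ℝ) : ℂ) • (x - algebraMap ℂ M (τ x)) := by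
  
  have hτalg : ∀ c : ℂ, τ (algebraMap ℂ M c) = c := by
    intro c; rw [Algebra.algebraMap_eq_smul_one, map_smul, hτ1, smul_eq_mul, mul_one]
  -- τ (star a) = conj (τ a)
  have herm : ∀ a b : M, τ (star b * a) = (starRingEnd ℂ) (τ (star a * b)) := by
    intro a b
    have ha := (hpos a).2
    have hb := (hpos b).2
    have h1 := (hpos (a + b)).2
    have h2 := (hpos (a + Complex.I • b)).2
    have e1 : star (a + b) * (a + b)
        = star a * a + (star a * b + star b * a + star b * b) := by
      simp only [star_add]; noncomm_ring
    have e2 : star (a + Complex.I • b) * (a + Complex.I • b)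
        = star a * a + (Complex.I • (star a * b) - Complex.I • (star b * a)
            + star b * b) := by
      simp only [star_add, star_smul, Complex.star_def, Complex.conj_I]
      simp only [mul_add, add_mul, smul_mul_assoc, mul_smul_comm, smul_smul,
        neg_mul, Complex.I_mul_I, neg_neg, one_smul, neg_smul]
      match_scalars <;> simp [Complex.I_sq]
    rw [e1] at h1
    rw [e2] at h2
    simp only [map_add, map_sub, map_smul, smul_eq_mul, Complex.add_im, Complex.sub_im,
      Complex.mul_im, Complex.I_re, Complex.I_im, ha, hb] at h1 h2
    apply Complex.ext
    · simp only [Complex.conj_re]; nlinarith [h2]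
    · simp only [Complex.conj_im]; nlinarith [h1]
  have hconj : τ (star u) = (starRingEnd ℂ) (τ u) := by
    have h := herm u 1
    simp only [star_one, one_mul, mul_one] at h
    have := congrArg (starRingEnd ℂ) h
    simpa using this.symm
  have hτmul : ∀ (m : M) (c : ℂ), τ (m * algebraMap ℂ M c) = c * τ m := by
    intro m c; rw [← Algebra.commutes, ← Algebra.smul_def, map_smul, smul_eq_mul]
  -- notation
  set A : Subalgebra ℂ M := (StarAlgebra.adjoin ℂ {u}).toSubalgebra with hA
  have huA : u ∈ A :=
    StarSubalgebra.mem_toSubalgebra.2 (StarAlgebra.subset_adjoin ℂ {u} rfl)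
  have hsuA : star u ∈ A :=
    StarSubalgebra.mem_toSubalgebra.2 (star_mem (StarAlgebra.subset_adjoin ℂ {u} rfl))
  set ξ := τ x with hξ
  set α := τ u with hα
  set x0 : M := x - algebraMap ℂ M ξ with hx0
  set u0 : M := u - algebraMap ℂ M α with hu0
  set v0 : M := star u - algebraMap ℂ M ((starRingEnd ℂ) α) with hv0
  have hx0N : x0 ∈ N := sub_mem hx (algebraMap_mem N ξ)
  have hx0NB : x0 ∈ N.toSubalgebra := hx0N
  have hu0A : u0 ∈ A := sub_mem huA (algebraMap_mem _ α)
  have hv0A : v0 ∈ A := sub_mem hsuA (algebraMap_mem _ _)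
  have hx00 : τ x0 = 0 := by rw [hx0, map_sub, hτalg, hξ, sub_self]
  have hu00 : τ u0 = 0 := by rw [hu0, map_sub, hτalg, hα, sub_self]
  have hv00 : τ v0 = 0 := by rw [hv0, map_sub, hτalg, hconj, hα, sub_self]
  -- the key trace computation
  have hkey : ∀ y ∈ N, τ (u * x * star u * y)
      = ξ * τ y + (α * (starRingEnd ℂ) α) * (τ (x * y) - ξ * τ y) := by
    intro y hy
    set η := τ y with hη
    set y0 : M := y - algebraMap ℂ M η with hy0
    have hy0N : y0 ∈ N := sub_mem hy (algebraMap_mem N η)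
    have hy00 : τ y0 = 0 := by rw [hy0, map_sub, hτalg, hη, sub_self]
    have hexp : u * x * star u * y =
        u0*x0*v0*y0 + ((starRingEnd ℂ) α) • (u0*(x0*y0)) + α • (x0*v0*y0)
          + (α * (starRingEnd ℂ) α) • (x0*y0)
          + η • (u * x0 * star u) + ξ • (u * (star u * y0))
          + (ξ*η) • (u * star u) := by
      have hx' : x = x0 + algebraMap ℂ M ξ := by rw [hx0, sub_add_cancel]
      have hy' : y = y0 + algebraMap ℂ M η := by rw [hy0, sub_add_cancel]
      have hu' : u = u0 + algebraMap ℂ M α := by rw [hu0, sub_add_cancel]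
      have hv' : star u = v0 + algebraMap ℂ M ((starRingEnd ℂ) α) := by
        rw [hv0, sub_add_cancel]
      calc u * x * star u * y
          = u * (x0 + algebraMap ℂ M ξ) * star u * (y0 + algebraMap ℂ M η) := by
            rw [← hx', ← hy']
        _ = u * x0 * star u * y0 + η • (u * x0 * star u) + ξ • (u * (star u * y0))
              + (ξ*η) • (u * star u) := by
            simp only [Algebra.algebraMap_eq_smul_one]
            simp only [mul_add, add_mul, smul_mul_assoc, mul_smul_comm, smul_smul,
              mul_one, one_mul, mul_assoc]
            module
        _ = (u0 + algebraMap ℂ M α) * x0 * (v0 + algebraMap ℂ M ((starRingEnd ℂ) α)) * y0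
              + η • (u * x0 * star u) + ξ • (u * (star u * y0))
              + (ξ*η) • (u * star u) := by rw [← hu', ← hv']
        _ = _ := by
            simp only [Algebra.algebraMap_eq_smul_one]
            simp only [mul_add, add_mul, smul_mul_assoc, mul_smul_comm, smul_smul,
              mul_one, one_mul, mul_assoc]
            module
    have t1 : τ (u0*x0*v0*y0) = 0 :=
      freeFour hfree hu0A hx0NB hv0A hy0N hu00 hx00 hv00 hy00
    have t2 : τ (u0*(x0*y0)) = 0 := by
      have hwN : x0*y0 - algebraMap ℂ M (τ (x0*y0)) ∈ N.toSubalgebra :=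
        sub_mem (mul_mem hx0N hy0N) (algebraMap_mem N _)
      have hw0 : τ (x0*y0 - algebraMap ℂ M (τ (x0*y0))) = 0 := by
        rw [map_sub, hτalg, sub_self]
      have := freeTwo hfree hu0A hwN hu00 hw0
      rw [mul_sub] at this
      rw [← sub_add_cancel (u0*(x0*y0)) (u0 * algebraMap ℂ M (τ (x0*y0))), map_add, this,
        zero_add, hτmul, hu00, mul_zero]
    have t3 : τ (x0*v0*y0) = 0 := freeThree hfree hx0NB hv0A hy0N hx00 hv00 hy00
    have t4 : τ (x0*y0) = τ (x*y) - ξ*η := by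
      have : x0*y0 = x*y - η • x - ξ • y + (ξ*η) • (1:M) := by
        rw [hx0, hy0]
        simp only [Algebra.algebraMap_eq_smul_one]
        simp only [mul_sub, sub_mul, smul_mul_assoc, mul_smul_comm, smul_smul,
          mul_one, one_mul]
        module
      rw [this]
      simp only [map_add, map_sub, map_smul, smul_eq_mul, hτ1, ← hξ, ← hη]
      ring
    have t5 : τ (u * x0 * star u) = 0 := by
      rw [htr (u * x0) (star u), ← mul_assoc, hu, one_mul, hx00]
    have t6 : τ (u * (star u * y0)) = 0 := by
      rw [← mul_assoc, hu', one_mul, hy00]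
    have t7 : τ (u * star u) = 1 := by rw [hu', hτ1]
    rw [hexp]
    simp only [map_add, map_smul, smul_eq_mul, t1, t2, t3, t4, t5, t6, t7]
    ring
  -- conclude via faithfulness
  have hnorm : ((‖τ u‖ ^ 2 : ℝ) : ℂ) = α * (starRingEnd ℂ) α := by
    rw [← hα, Complex.mul_conj']; push_cast; ring
  set z : M := algebraMap ℂ M ξ + (α * (starRingEnd ℂ) α) • (x - algebraMap ℂ M ξ)
    with hz
  have hzN : z ∈ N := add_mem (algebraMap_mem N ξ)
    (SMulMemClass.smul_mem _ (sub_mem hx (algebraMap_mem N ξ)))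
  have hτz : ∀ y ∈ N, τ (z * y) = τ (u * x * star u * y) := by
    intro y hy
    rw [hkey y hy, hz]
    simp only [add_mul, smul_mul_assoc, sub_mul, map_add, map_smul, map_sub,
      smul_eq_mul]
    rw [show (algebraMap ℂ M) ξ * y = ξ • y from (Algebra.smul_def ξ y).symm, map_smul,
      smul_eq_mul]
  have hEy : ∀ y ∈ N, τ ((E (u * x * star u) - z) * y) = 0 := by
    intro y hy
    rw [sub_mul, map_sub, hEcond _ y hy, hτz y hy, sub_self]
  have hd0 : E (u * x * star u) - z = 0 := by
    apply hfaithful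
    rw [htr]
    exact hEy _ (star_mem (sub_mem (hEmem _) hzN))
  rw [hnorm]
  have := sub_eq_zero.mp hd0
  rw [this, hz, hξ]
end

section
/- Let (M, τ) be a tracial W*-probability space with τ faithful, u ∈ M a unitary *-freely independent of a unital W*-subalgebra N, and E : M → N the τ-preserving conditional expectation. Then for any x, z ∈ N, E([z, u x u*]) = |τ(u)|² [z, x], where [a,b] = ab − ba. In particular if z commutes with x then E([z, u x u*]) = 0. -/
/-!
Centring each factor and expanding, freeness gives the fourth mixed moment
`τ(a b a' b') = τ(a a') τ(b) τ(b') + τ(a) τ(a') τ(b b') - τ(a) τ(a') τ(b) τ(b')`.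
With `a = u`, `a' = u*` and `τ(u*) = conj τ(u)` this says that, tested against `N`,
`u x u*` looks like `τ(x) 1 + |τ(u)|² (x - τ(x) 1)`; faithfulness turns this into the formula
for `E(u x u*)`. Since `E` is an `N`-bimodule map, `E[z, u x u*] = [z, E(u x u*)] = |τ(u)|² [z, x]`.
-/

theorem sub_smul_one_mem {M : Type*} [Ring M] [Algebra ℂ M] {S : Subalgebra ℂ M}
    {a : M} (ha : a ∈ S) (c : ℂ) : a - c • 1 ∈ S :=
  sub_mem ha (S.smul_mem (one_mem S) c)

theorem map_sub_smul_one_eq_zero {M : Type*} [Ring M] [Algebra ℂ M] {τ : M →ₗ[ℂ] ℂ}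
    (hτ1 : τ 1 = 1) (a : M) : τ (a - τ a • 1) = 0 := by
  simp [hτ1]

namespace FreeIndep

variable {M : Type*} [Ring M] [Algebra ℂ M] {τ : M →ₗ[ℂ] ℂ} {A B : Subalgebra ℂ M}

theorem symm (hfree : FreeIndep τ A B) : FreeIndep τ B A := by
  intro k x ι hk hmem hx halt
  refine hfree k x (fun j => !ι j) hk (fun j => ?_) hx fun j h => by simpa using halt j h
  cases h : ι j <;> simpa [h] using hmem j

theorem map_prod_eq_zero (hfree : FreeIndep τ A B) {k : ℕ} (hk : 0 < k) (x : Fin k → M)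
    (hmem : ∀ j : Fin k, if Even (j : ℕ) then x j ∈ A else x j ∈ B)
    (hx : ∀ j, τ (x j) = 0) : τ (List.ofFn x).prod = 0 :=
  hfree k x (fun j => decide (Even (j : ℕ))) hk (by simpa using hmem) hx
    fun j _ => by simp only [Nat.even_add_one, ne_eq, decide_eq_decide]; tauto

theorem map_mul_eq_zero (hfree : FreeIndep τ A B) {a b : M} (ha : a ∈ A) (hb : b ∈ B)
    (ha0 : τ a = 0) (hb0 : τ b = 0) : τ (a * b) = 0 := by
  simpa using hfree.map_prod_eq_zero (k := 2) (by norm_num) ![a, b]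
    (fun j => by fin_cases j <;> simpa) (fun j => by fin_cases j <;> simpa)

theorem map_mul_mul_eq_zero (hfree : FreeIndep τ A B) {a b a' : M} (ha : a ∈ A) (hb : b ∈ B)
    (ha' : a' ∈ A) (ha0 : τ a = 0) (hb0 : τ b = 0) (ha'0 : τ a' = 0) : τ (a * b * a') = 0 := by
  simpa [mul_assoc] using hfree.map_prod_eq_zero (k := 3) (by norm_num) ![a, b, a']
    (fun j => by fin_cases j <;> simpa) (fun j => by fin_cases j <;> simpa)

theorem map_mul_mul_mul_eq_zero (hfree : FreeIndep τ A B) {a b a' b' : M} (ha : a ∈ A)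
    (hb : b ∈ B) (ha' : a' ∈ A) (hb' : b' ∈ B) (ha0 : τ a = 0) (hb0 : τ b = 0)
    (ha'0 : τ a' = 0) (hb'0 : τ b' = 0) : τ (a * b * a' * b') = 0 := by
  simpa [mul_assoc] using hfree.map_prod_eq_zero (k := 4) (by norm_num) ![a, b, a', b']
    (fun j => by fin_cases j <;> simpa) (fun j => by fin_cases j <;> simpa)

theorem map_mul (hfree : FreeIndep τ A B) (hτ1 : τ 1 = 1) {a b : M} (ha : a ∈ A) (hb : b ∈ B) :
    τ (a * b) = τ a * τ b := by
  have h := hfree.map_mul_eq_zero (sub_smul_one_mem ha (τ a)) (sub_smul_one_mem hb (τ b))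
    (map_sub_smul_one_eq_zero hτ1 a) (map_sub_smul_one_eq_zero hτ1 b)
  simp only [sub_mul, mul_sub, smul_mul_assoc, mul_smul_comm, one_mul, mul_one,
    map_sub, map_smul, smul_eq_mul, hτ1] at h
  linear_combination h

theorem map_mul_mul (hfree : FreeIndep τ A B) (hτ1 : τ 1 = 1) {a b a' : M} (ha : a ∈ A)
    (hb : b ∈ B) (ha' : a' ∈ A) : τ (a * b * a') = τ (a * a') * τ b := by
  have h := hfree.map_mul_mul_eq_zero (sub_smul_one_mem ha (τ a)) (sub_smul_one_mem hb (τ b))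
    (sub_smul_one_mem ha' (τ a')) (map_sub_smul_one_eq_zero hτ1 a)
    (map_sub_smul_one_eq_zero hτ1 b) (map_sub_smul_one_eq_zero hτ1 a')
  simp only [sub_mul, mul_sub, smul_mul_assoc, mul_smul_comm, one_mul, mul_one,
    map_sub, map_smul, smul_eq_mul, hτ1] at h
  rw [hfree.map_mul hτ1 ha hb, hfree.symm.map_mul hτ1 hb ha'] at h
  linear_combination h

theorem map_mul_mul_mul (hfree : FreeIndep τ A B) (hτ1 : τ 1 = 1) {a b a' b' : M} (ha : a ∈ A)
    (hb : b ∈ B) (ha' : a' ∈ A) (hb' : b' ∈ B) :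
    τ (a * b * a' * b') =
      τ (a * a') * τ b * τ b' + τ a * τ a' * τ (b * b') - τ a * τ a' * τ b * τ b' := by
  have h := hfree.map_mul_mul_mul_eq_zero (sub_smul_one_mem ha (τ a))
    (sub_smul_one_mem hb (τ b)) (sub_smul_one_mem ha' (τ a')) (sub_smul_one_mem hb' (τ b'))
    (map_sub_smul_one_eq_zero hτ1 a) (map_sub_smul_one_eq_zero hτ1 b)
    (map_sub_smul_one_eq_zero hτ1 a') (map_sub_smul_one_eq_zero hτ1 b')
  simp only [sub_mul, mul_sub, smul_mul_assoc, mul_smul_comm, one_mul, mul_one,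
    map_sub, map_smul, smul_eq_mul, hτ1] at h
  rw [hfree.symm.map_mul_mul hτ1 hb ha' hb', hfree.map_mul hτ1 (mul_mem ha ha') hb',
    mul_assoc a b b', hfree.map_mul hτ1 ha (mul_mem hb hb'), hfree.map_mul_mul hτ1 ha hb ha',
    hfree.map_mul hτ1 ha' hb', hfree.map_mul hτ1 ha hb', hfree.symm.map_mul hτ1 hb ha',
    hfree.map_mul hτ1 ha hb] at h
  linear_combination h

end FreeIndep

section StarAlgebra

variable {M : Type*} [Ring M] [Algebra ℂ M] [StarRing M] [StarModule ℂ M] {τ : M →ₗ[ℂ] ℂ}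

open ComplexConjugate

theorem map_star_eq_conj_of_im_eq_zero (hreal : ∀ a : M, (τ (star a * a)).im = 0) (a : M) :
    τ (star a) = conj (τ a) := by
  have h₀ : (τ 1).im = 0 := by simpa using hreal 1
  have h₁ := hreal (1 + a)
  have h₂ := hreal (1 + Complex.I • a)
  simp only [star_add, star_one, star_smul, Complex.star_def, Complex.conj_I, add_mul, mul_add,
    one_mul, mul_one, smul_mul_assoc, mul_smul_comm, map_add, map_smul, smul_eq_mul,
    Complex.add_im, Complex.mul_im, Complex.mul_re, neg_mul, Complex.neg_re, Complex.neg_im,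
    Complex.I_re, Complex.I_im, h₀, hreal a] at h₁ h₂
  apply Complex.ext <;> simp <;> linarith

theorem eq_of_forall_map_mul_eq (hfaithful : ∀ a : M, τ (star a * a) = 0 → a = 0)
    {N : StarSubalgebra ℂ M} {a b : M} (ha : a ∈ N) (hb : b ∈ N)
    (h : ∀ y ∈ N, τ (a * y) = τ (b * y)) : a = b := by
  have hab := h _ (star_mem (sub_mem ha hb))
  rw [← sub_eq_zero, ← map_sub, ← sub_mul] at hab
  simpa [sub_eq_zero] using hfaithful (star (a - b)) (by rwa [star_star])

section CondExp

variable {N : StarSubalgebra ℂ M} {E : M →ₗ[ℂ] M}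

theorem condExp_mul_left (htr : ∀ a b : M, τ (a * b) = τ (b * a))
    (hfaithful : ∀ a : M, τ (star a * a) = 0 → a = 0) (hEmem : ∀ m, E m ∈ N)
    (hEcond : ∀ m : M, ∀ y ∈ N, τ (E m * y) = τ (m * y)) {z : M} (hz : z ∈ N) (m : M) :
    E (z * m) = z * E m := by
  refine eq_of_forall_map_mul_eq hfaithful (hEmem _) (mul_mem hz (hEmem m)) fun y hy => ?_
  calc τ (E (z * m) * y) = τ (m * (y * z)) := by rw [hEcond _ y hy, mul_assoc, htr, mul_assoc]
    _ = τ (E m * (y * z)) := (hEcond m _ (mul_mem hy hz)).symm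
    _ = τ (z * E m * y) := by rw [← mul_assoc, htr, mul_assoc]

theorem condExp_mul_right (hfaithful : ∀ a : M, τ (star a * a) = 0 → a = 0)
    (hEmem : ∀ m, E m ∈ N) (hEcond : ∀ m : M, ∀ y ∈ N, τ (E m * y) = τ (m * y)) {z : M}
    (hz : z ∈ N) (m : M) : E (m * z) = E m * z := by
  refine eq_of_forall_map_mul_eq hfaithful (hEmem _) (mul_mem (hEmem m) hz) fun y hy => ?_
  rw [hEcond _ y hy, mul_assoc, mul_assoc, hEcond m _ (mul_mem hz hy)]

theorem condExp_unitary_conj (hτ1 : τ 1 = 1) (hreal : ∀ a : M, (τ (star a * a)).im = 0)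
    (hfaithful : ∀ a : M, τ (star a * a) = 0 → a = 0) {u : M} (hu : u * star u = 1)
    (hfree : FreeIndep τ (StarAlgebra.adjoin ℂ {u}).toSubalgebra N.toSubalgebra)
    (hEmem : ∀ m, E m ∈ N) (hEcond : ∀ m : M, ∀ y ∈ N, τ (E m * y) = τ (m * y))
    {x : M} (hx : x ∈ N) :
    E (u * x * star u) = τ x • 1 + ((‖τ u‖ ^ 2 : ℝ) : ℂ) • (x - τ x • 1) := by
  have hnorm : τ u * τ (star u) = ((‖τ u‖ ^ 2 : ℝ) : ℂ) := by
    rw [map_star_eq_conj_of_im_eq_zero hreal, Complex.mul_conj', Complex.ofReal_pow]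
  have hmem : τ x • 1 + ((‖τ u‖ ^ 2 : ℝ) : ℂ) • (x - τ x • 1) ∈ N :=
    add_mem (N.smul_mem (one_mem N) _) (N.smul_mem (sub_smul_one_mem hx _) _)
  refine eq_of_forall_map_mul_eq hfaithful (hEmem _) hmem fun y hy => ?_
  rw [hEcond _ y hy, hfree.map_mul_mul_mul hτ1 (StarAlgebra.self_mem_adjoin_singleton ℂ u) hx
    (StarAlgebra.star_self_mem_adjoin_singleton ℂ u) hy, hu, hτ1, hnorm]
  simp only [add_mul, sub_mul, smul_mul_assoc, one_mul, map_add, map_sub, map_smul, smul_eq_mul]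
  ring

end CondExp

end StarAlgebra

theorem condExp_commutator_unitary_conjugation_general
    {M : Type*} [Ring M] [Algebra ℂ M] [StarRing M] [StarModule ℂ M]
    (τ : M →ₗ[ℂ] ℂ)
    (hτ1 : τ 1 = 1) (htr : ∀ a b : M, τ (a * b) = τ (b * a))
    (hpos : ∀ a : M, 0 ≤ (τ (star a * a)).re ∧ (τ (star a * a)).im = 0)
    (hfaithful : ∀ a : M, τ (star a * a) = 0 → a = 0)
    (N : StarSubalgebra ℂ M)
    (u : M) (hu' : u * star u = 1)
    (hfree : FreeIndep τ (StarAlgebra.adjoin ℂ {u}).toSubalgebra N.toSubalgebra)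
    (E : M →ₗ[ℂ] M) (hEmem : ∀ m, E m ∈ N)
    (hEcond : ∀ m : M, ∀ y ∈ N, τ (E m * y) = τ (m * y))
    (x z : M) (hx : x ∈ N) (hz : z ∈ N) :
    E (z * (u * x * star u) - (u * x * star u) * z) =
        ((‖τ u‖ ^ 2 : ℝ) : ℂ) • (z * x - x * z) ∧
      (z * x = x * z → E (z * (u * x * star u) - (u * x * star u) * z) = 0) := by
  have hmain : E (z * (u * x * star u) - (u * x * star u) * z) =
      ((‖τ u‖ ^ 2 : ℝ) : ℂ) • (z * x - x * z) := by
    rw [map_sub, condExp_mul_left htr hfaithful hEmem hEcond hz,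
      condExp_mul_right hfaithful hEmem hEcond hz,
      condExp_unitary_conj hτ1 (fun a => (hpos a).2) hfaithful hu' hfree hEmem hEcond hx]
    simp only [mul_add, add_mul, mul_sub, sub_mul, smul_mul_assoc, mul_smul_comm, one_mul,
      mul_one, smul_sub]
    abel
  exact ⟨hmain, fun hcomm => by rw [hmain, hcomm, sub_self, smul_zero]⟩

/-- If u is a unitary *-free from N, E the τ-preserving conditional expectation onto N,
then for x, z ∈ N: E([z, u x u*]) = |τ(u)|²·[z, x]; in particular it vanishes
when z commutes with x. -/
theorem condExp_commutator_unitary_conjugation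
    {M : Type*} [Ring M] [Algebra ℂ M] [StarRing M] [StarModule ℂ M]
    (τ : M →ₗ[ℂ] ℂ)
    (hτ1 : τ 1 = 1) (htr : ∀ a b : M, τ (a * b) = τ (b * a))
    (hpos : ∀ a : M, 0 ≤ (τ (star a * a)).re ∧ (τ (star a * a)).im = 0)
    (hfaithful : ∀ a : M, τ (star a * a) = 0 → a = 0)
    (N : StarSubalgebra ℂ M)
    (u : M) (hu : star u * u = 1) (hu' : u * star u = 1)
    (hfree : FreeIndep τ (StarAlgebra.adjoin ℂ {u}).toSubalgebra N.toSubalgebra)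
    (E : M →ₗ[ℂ] M) (hEmem : ∀ m, E m ∈ N)
    (hEcond : ∀ m : M, ∀ y ∈ N, τ (E m * y) = τ (m * y))
    (x z : M) (hx : x ∈ N) (hz : z ∈ N) :
    E (z * (u * x * star u) - (u * x * star u) * z) =
        ((‖τ u‖ ^ 2 : ℝ) : ℂ) • (z * x - x * z) ∧
      (z * x = x * z → E (z * (u * x * star u) - (u * x * star u) * z) = 0) :=
  condExp_commutator_unitary_conjugation_general τ hτ1 htr hpos hfaithful N u hu' hfree E hEmem
    hEcond x z hx hz
end

section
/- The space TS^c(C*_R⟨x(·)⟩) of tracial states τ on the universal C*-algebra C*_R⟨x(·)⟩ such that all processes t ↦ π_τ(x_{ij}(t)) are strong-operator continuous, equipped with the metric d(τ₁,τ₂) = Σ_{m,ℓ≥1} 2^{−m}(2R)^{−ℓ} max_{w ∈ W_ℓ} sup_{(t₁,…,t_ℓ)∈[0,m]^ℓ} |τ₁(w(t₁,…,t_ℓ)) − τ₂(w(t₁,…,t_ℓ))|, is a complete metric space. -/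
open scoped NNReal

/-- The letters x_{ij}, 1 ≤ i ≤ n+1, 1 ≤ j ≤ r(i). -/
abbrev Letter (n : ℕ) (r : Fin (n + 1) → ℕ) := Σ i : Fin (n + 1), Fin (r i)

/-- A tracial state on the universal C*-algebra C*_R⟨x(·)⟩ (generated by
self-adjoint elements x_{ij}(t), t ≥ 0, of norm ≤ R) whose GNS processes are
strong-operator continuous, encoded by its moment functional on words.
A word is a list of pairs (letter, time). The fields encode: normalization,
traciality, the *-structure (letters are self-adjoint, so star reverses words),
positivity, the operator norm bound ‖x_{ij}(t)‖ ≤ R (both as the moment growth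
bound and as positivity of R² − x_{ij}(t)² in the GNS representation), and
— via Lemma 2.1 — strong-operator continuity of the processes, i.e. joint
continuity of all moments in the time variables. -/
structure TracialStateC (n : ℕ) (r : Fin (n + 1) → ℕ) (R : ℝ) where
  tr : List (Letter n r × ℝ≥0) → ℂ
  normalized : tr [] = 1
  tracial : ∀ w v : List (Letter n r × ℝ≥0), tr (w ++ v) = tr (v ++ w)
  star_word : ∀ w : List (Letter n r × ℝ≥0), tr w.reverse = starRingEnd ℂ (tr w)
  positive : ∀ (k : ℕ) (ws : Fin k → List (Letter n r × ℝ≥0)) (c : Fin k → ℂ),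
    0 ≤ (∑ a, ∑ b, starRingEnd ℂ (c a) * c b * tr ((ws a).reverse ++ ws b)).re
  norm_bound : ∀ w : List (Letter n r × ℝ≥0), ‖tr w‖ ≤ R ^ w.length
  generator_bound : ∀ (k : ℕ) (ws : Fin k → List (Letter n r × ℝ≥0))
      (c : Fin k → ℂ) (x : Letter n r) (t : ℝ≥0),
    (∑ a, ∑ b, starRingEnd ℂ (c a) * c b *
        tr ((ws a).reverse ++ [(x, t), (x, t)] ++ ws b)).re ≤
      R ^ 2 * (∑ a, ∑ b, starRingEnd ℂ (c a) * c b *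
        tr ((ws a).reverse ++ ws b)).re
  moment_continuous : ∀ (ℓ : ℕ) (ls : Fin ℓ → Letter n r),
    Continuous fun ts : Fin ℓ → ℝ≥0 => tr (List.ofFn fun k => (ls k, ts k))

/-- The metric d(τ₁,τ₂) = Σ_{m,ℓ ≥ 1} 2^{−m}(2R)^{−ℓ} · max_{w ∈ W_ℓ}
sup_{(t₁,…,t_ℓ) ∈ [0,m]^ℓ} |τ₁(w(t₁,…,t_ℓ)) − τ₂(w(t₁,…,t_ℓ))|. -/
noncomputable def trDist {n : ℕ} {r : Fin (n + 1) → ℕ} {R : ℝ}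
    (τ₁ τ₂ : TracialStateC n r R) : ℝ :=
  ∑' q : ℕ × ℕ,
    (1 / 2 ^ (q.1 + 1)) * (1 / (2 * R) ^ (q.2 + 1)) *
      ⨆ ls : Fin (q.2 + 1) → Letter n r,
        ⨆ ts : Fin (q.2 + 1) → (Set.Icc (0 : ℝ≥0) ((q.1 : ℝ≥0) + 1)),
          ‖(τ₁.tr (List.ofFn fun k => (ls k, (ts k : ℝ≥0))) -
              τ₂.tr (List.ofFn fun k => (ls k, (ts k : ℝ≥0))))‖

/-!
A word of length `ℓ + 1` with all times in `[0, m + 1]` enters the `(m, ℓ)` term of `d` with a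
positive weight, so `d` controls every moment; in particular `d` separates points, and the moments
of a `d`-Cauchy sequence converge pointwise. All conditions defining a state are closed under
pointwise limits. The Cauchy estimate for the `(m, ℓ)` term is uniform over the time box
`[0, m + 1]^(ℓ + 1)`, so the limit moments are locally uniform limits of continuous functions,
hence continuous, and every term of `d(u a, τ)` tends to `0`. Since `‖τ(w)‖ ≤ R^ℓ` bounds the
`(m, ℓ)` term by `2^(-m-ℓ)`, Tannery's theorem gives `d(u a, τ) → 0`.
-/

open Filter Topology Set

theorem tendsto_re_sum_sum_conj_mul {α ι : Type*} {l : Filter ι} {F : ι → α → ℂ} {L : α → ℂ}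
    (hL : ∀ w, Tendsto (fun a => F a w) l (𝓝 (L w))) {k : ℕ} (c : Fin k → ℂ)
    (W : Fin k → Fin k → α) :
    Tendsto (fun a => (∑ i, ∑ j, starRingEnd ℂ (c i) * c j * F a (W i j)).re) l
      (𝓝 (∑ i, ∑ j, starRingEnd ℂ (c i) * c j * L (W i j)).re) :=
  (Complex.continuous_re.tendsto _).comp <| tendsto_finsetSum _ fun i _ =>
    tendsto_finsetSum _ fun j _ => (hL (W i j)).const_mul _

theorem exists_nat_forall_lt_add_one {ι : Type*} [Finite ι] (ts : ι → ℝ≥0) :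
    ∃ m : ℕ, ∀ k, ts k < m + 1 := by
  obtain ⟨M, hM⟩ := Finite.exists_le ts
  obtain ⟨m, hm⟩ := exists_nat_ge M
  exact ⟨m, fun k => (hM k).trans_lt (hm.trans_lt (lt_add_one _))⟩

theorem continuous_of_tendstoUniformlyOn_Iic {ι α β : Type*} [Finite ι] [UniformSpace β]
    {p : Filter α} [p.NeBot] {F : α → (ι → ℝ≥0) → β} {f : (ι → ℝ≥0) → β}
    (hF : ∀ a, Continuous (F a))
    (h : ∀ m : ℕ, TendstoUniformlyOn F f p (univ.pi fun _ => Iic ((m : ℝ≥0) + 1))) :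
    Continuous f := by
  refine (tendstoLocallyUniformly_of_forall_exists_nhds (p := p) fun t => ?_).continuous
    (Eventually.of_forall hF).frequently
  obtain ⟨m, hm⟩ := exists_nat_forall_lt_add_one t
  exact ⟨_, set_pi_mem_nhds finite_univ fun k _ => Iic_mem_nhds (hm k), h m⟩

namespace TracialStateC

variable {n : ℕ} {r : Fin (n + 1) → ℕ} {R : ℝ}

abbrev timedWord {ℓ : ℕ} (ls : Fin ℓ → Letter n r) (ts : Fin ℓ → ℝ≥0) :
    List (Letter n r × ℝ≥0) :=
  List.ofFn fun k => (ls k, ts k)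

@[ext]
theorem ext {τ₁ τ₂ : TracialStateC n r R} (h : τ₁.tr = τ₂.tr) : τ₁ = τ₂ := by
  cases τ₁; cases τ₂; congr

theorem exists_eq_timedWord {w : List (Letter n r × ℝ≥0)} (hw : w ≠ []) :
    ∃ (ℓ : ℕ) (ls : Fin (ℓ + 1) → Letter n r) (ts : Fin (ℓ + 1) → ℝ≥0),
      w = timedWord ls ts := by
  obtain _ | ⟨p, w⟩ := w
  · exact absurd rfl hw
  · exact ⟨w.length, fun k => ((p :: w).get k).1, fun k => ((p :: w).get k).2,
      (List.ofFn_get _).symm⟩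

theorem norm_tr_sub_tr_le (τ₁ τ₂ : TracialStateC n r R) (w : List (Letter n r × ℝ≥0)) :
    ‖τ₁.tr w - τ₂.tr w‖ ≤ 2 * R ^ w.length :=
  calc ‖τ₁.tr w - τ₂.tr w‖ ≤ ‖τ₁.tr w‖ + ‖τ₂.tr w‖ := norm_sub_le _ _
    _ ≤ R ^ w.length + R ^ w.length := add_le_add (τ₁.norm_bound w) (τ₂.norm_bound w)
    _ = 2 * R ^ w.length := (two_mul _).symm

def ofTendsto {ι : Type*} {l : Filter ι} [l.NeBot] (u : ι → TracialStateC n r R)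
    (L : List (Letter n r × ℝ≥0) → ℂ) (hL : ∀ w, Tendsto (fun a => (u a).tr w) l (𝓝 (L w)))
    (hcont : ∀ (ℓ : ℕ) (ls : Fin ℓ → Letter n r), Continuous fun ts => L (timedWord ls ts)) :
    TracialStateC n r R where
  tr := L
  normalized := tendsto_nhds_unique_of_eventuallyEq (hL []) tendsto_const_nhds
    (.of_forall fun a => (u a).normalized)
  tracial w v := tendsto_nhds_unique_of_eventuallyEq (hL _) (hL _)
    (.of_forall fun a => (u a).tracial w v)
  star_word w := tendsto_nhds_unique_of_eventuallyEq (hL _)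
    ((Complex.continuous_conj.tendsto _).comp (hL w)) (.of_forall fun a => (u a).star_word w)
  positive k ws c := ge_of_tendsto' (tendsto_re_sum_sum_conj_mul hL c _)
    fun a => (u a).positive k ws c
  norm_bound w := le_of_tendsto' (hL w).norm fun a => (u a).norm_bound w
  generator_bound k ws c x t := le_of_tendsto_of_tendsto' (tendsto_re_sum_sum_conj_mul hL c _)
    ((tendsto_re_sum_sum_conj_mul hL c _).const_mul _) fun a => (u a).generator_bound k ws c x t
  moment_continuous := hcont

end TracialStateC

section Metric

variable {n : ℕ} {r : Fin (n + 1) → ℕ} {R : ℝ}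

open TracialStateC

noncomputable def distWeight (R : ℝ) (q : ℕ × ℕ) : ℝ :=
  1 / 2 ^ (q.1 + 1) * (1 / (2 * R) ^ (q.2 + 1))

noncomputable def supDist (τ₁ τ₂ : TracialStateC n r R) (q : ℕ × ℕ) : ℝ :=
  ⨆ ls : Fin (q.2 + 1) → Letter n r,
    ⨆ ts : Fin (q.2 + 1) → Set.Icc (0 : ℝ≥0) ((q.1 : ℝ≥0) + 1),
      ‖τ₁.tr (timedWord ls fun k => ts k) - τ₂.tr (timedWord ls fun k => ts k)‖

theorem trDist_eq_tsum (τ₁ τ₂ : TracialStateC n r R) :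
    trDist τ₁ τ₂ = ∑' q, distWeight R q * supDist τ₁ τ₂ q :=
  rfl

theorem distWeight_pos (hR : 0 < R) (q : ℕ × ℕ) : 0 < distWeight R q := by
  unfold distWeight
  positivity

theorem supDist_nonneg (τ₁ τ₂ : TracialStateC n r R) (q : ℕ × ℕ) : 0 ≤ supDist τ₁ τ₂ q :=
  Real.iSup_nonneg fun _ => Real.iSup_nonneg fun _ => norm_nonneg _

theorem supDist_le (τ₁ τ₂ : TracialStateC n r R) {q : ℕ × ℕ} {c : ℝ} (hc : 0 ≤ c)
    (h : ∀ (ls : Fin (q.2 + 1) → Letter n r) (ts : Fin (q.2 + 1) → ℝ≥0),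
      (∀ k, ts k ≤ q.1 + 1) → ‖τ₁.tr (timedWord ls ts) - τ₂.tr (timedWord ls ts)‖ ≤ c) :
    supDist τ₁ τ₂ q ≤ c :=
  Real.iSup_le (fun ls => Real.iSup_le (fun ts => h ls _ fun k => (ts k).2.2) hc) hc

theorem supDist_le_two_mul_pow (hR : 0 < R) (τ₁ τ₂ : TracialStateC n r R) (q : ℕ × ℕ) :
    supDist τ₁ τ₂ q ≤ 2 * R ^ (q.2 + 1) :=
  supDist_le τ₁ τ₂ (by positivity) fun ls ts _ => by
    simpa using norm_tr_sub_tr_le τ₁ τ₂ (timedWord ls ts)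

theorem norm_sub_le_supDist (τ₁ τ₂ : TracialStateC n r R) {q : ℕ × ℕ}
    (ls : Fin (q.2 + 1) → Letter n r) (ts : Fin (q.2 + 1) → ℝ≥0) (hts : ∀ k, ts k ≤ q.1 + 1) :
    ‖τ₁.tr (timedWord ls ts) - τ₂.tr (timedWord ls ts)‖ ≤ supDist τ₁ τ₂ q := by
  refine le_ciSup₂ (f := fun ls (ts : Fin (q.2 + 1) → Set.Icc (0 : ℝ≥0) ((q.1 : ℝ≥0) + 1)) =>
    ‖τ₁.tr (timedWord ls fun k => ts k) - τ₂.tr (timedWord ls fun k => ts k)‖)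
    ⟨2 * R ^ (q.2 + 1), ?_⟩ ls fun k => ⟨ts k, zero_le, hts k⟩
  rintro _ ⟨_, ⟨ls', rfl⟩, ts', rfl⟩
  simpa using norm_tr_sub_tr_le τ₁ τ₂ (timedWord ls' fun k => ts' k)

theorem summable_half_pow_mul_half_pow :
    Summable fun q : ℕ × ℕ => ((1 : ℝ) / 2) ^ q.1 * (1 / 2) ^ q.2 :=
  summable_geometric_two.mul_of_nonneg summable_geometric_two
    (fun _ => by positivity) fun _ => by positivity

theorem distWeight_mul_supDist_le (hR : 0 < R) (τ₁ τ₂ : TracialStateC n r R) (q : ℕ × ℕ) :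
    distWeight R q * supDist τ₁ τ₂ q ≤ (1 / 2) ^ q.1 * (1 / 2) ^ q.2 :=
  calc distWeight R q * supDist τ₁ τ₂ q ≤ distWeight R q * (2 * R ^ (q.2 + 1)) :=
        mul_le_mul_of_nonneg_left (supDist_le_two_mul_pow hR τ₁ τ₂ q) (distWeight_pos hR q).le
    _ = (1 / 2) ^ q.1 * (1 / 2) ^ q.2 / 2 := by
        simp only [distWeight, div_pow, one_pow, mul_pow]
        field_simp
        ring
    _ ≤ (1 / 2) ^ q.1 * (1 / 2) ^ q.2 := half_le_self (by positivity)

theorem distWeight_mul_supDist_nonneg (hR : 0 < R) (τ₁ τ₂ : TracialStateC n r R)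
    (q : ℕ × ℕ) : 0 ≤ distWeight R q * supDist τ₁ τ₂ q :=
  mul_nonneg (distWeight_pos hR q).le (supDist_nonneg τ₁ τ₂ q)

theorem summable_distWeight_mul_supDist (hR : 0 < R) (τ₁ τ₂ : TracialStateC n r R) :
    Summable fun q => distWeight R q * supDist τ₁ τ₂ q :=
  .of_nonneg_of_le (distWeight_mul_supDist_nonneg hR τ₁ τ₂)
    (distWeight_mul_supDist_le hR τ₁ τ₂)
    summable_half_pow_mul_half_pow

theorem distWeight_mul_norm_sub_le_trDist (hR : 0 < R) (τ₁ τ₂ : TracialStateC n r R)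
    {m ℓ : ℕ} (ls : Fin (ℓ + 1) → Letter n r) (ts : Fin (ℓ + 1) → ℝ≥0)
    (hts : ∀ k, ts k ≤ m + 1) :
    distWeight R (m, ℓ) * ‖τ₁.tr (timedWord ls ts) - τ₂.tr (timedWord ls ts)‖ ≤
      trDist τ₁ τ₂ :=
  calc _ ≤ distWeight R (m, ℓ) * supDist τ₁ τ₂ (m, ℓ) :=
        mul_le_mul_of_nonneg_left (norm_sub_le_supDist τ₁ τ₂ (q := (m, ℓ)) ls ts hts)
          (distWeight_pos hR _).le
    _ ≤ trDist τ₁ τ₂ := (summable_distWeight_mul_supDist hR τ₁ τ₂).le_tsum (m, ℓ)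
        fun q _ => distWeight_mul_supDist_nonneg hR τ₁ τ₂ q

theorem trDist_nonneg (hR : 0 < R) (τ₁ τ₂ : TracialStateC n r R) : 0 ≤ trDist τ₁ τ₂ :=
  tsum_nonneg (distWeight_mul_supDist_nonneg hR τ₁ τ₂)

theorem exists_pos_mul_norm_sub_le_trDist (hR : 0 < R) (w : List (Letter n r × ℝ≥0)) :
    ∃ c > 0, ∀ τ₁ τ₂ : TracialStateC n r R, c * ‖τ₁.tr w - τ₂.tr w‖ ≤ trDist τ₁ τ₂ := by
  rcases eq_or_ne w [] with rfl | hw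
  · exact ⟨1, one_pos, fun τ₁ τ₂ => by
      simpa [τ₁.normalized, τ₂.normalized] using trDist_nonneg hR τ₁ τ₂⟩
  obtain ⟨ℓ, ls, ts, rfl⟩ := exists_eq_timedWord hw
  obtain ⟨m, hm⟩ := exists_nat_forall_lt_add_one ts
  exact ⟨distWeight R (m, ℓ), distWeight_pos hR _, fun τ₁ τ₂ =>
    distWeight_mul_norm_sub_le_trDist hR τ₁ τ₂ ls ts fun k => (hm k).le⟩

theorem trDist_self (τ : TracialStateC n r R) : trDist τ τ = 0 := by
  simp only [trDist, sub_self, norm_zero, Real.iSup_const_zero, mul_zero, tsum_zero]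

theorem eq_of_trDist_eq_zero (hR : 0 < R) {τ₁ τ₂ : TracialStateC n r R}
    (h : trDist τ₁ τ₂ = 0) : τ₁ = τ₂ := by
  ext w
  obtain ⟨c, hc, hle⟩ := exists_pos_mul_norm_sub_le_trDist hR w
  have hnorm : ‖τ₁.tr w - τ₂.tr w‖ ≤ 0 := nonpos_of_mul_nonpos_right (h ▸ hle τ₁ τ₂) hc
  exact sub_eq_zero.1 (norm_le_zero_iff.1 hnorm)

theorem trDist_comm (τ₁ τ₂ : TracialStateC n r R) : trDist τ₁ τ₂ = trDist τ₂ τ₁ := by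
  simp_rw [trDist, norm_sub_rev (τ₁.tr _)]

theorem supDist_le_add (τ₁ τ₂ τ₃ : TracialStateC n r R) (q : ℕ × ℕ) :
    supDist τ₁ τ₃ q ≤ supDist τ₁ τ₂ q + supDist τ₂ τ₃ q :=
  supDist_le τ₁ τ₃ (add_nonneg (supDist_nonneg τ₁ τ₂ q) (supDist_nonneg τ₂ τ₃ q))
    fun ls ts hts => (norm_sub_le_norm_sub_add_norm_sub _ _ _).trans
      (add_le_add (norm_sub_le_supDist τ₁ τ₂ ls ts hts) (norm_sub_le_supDist τ₂ τ₃ ls ts hts))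

theorem trDist_triangle (hR : 0 < R) (τ₁ τ₂ τ₃ : TracialStateC n r R) :
    trDist τ₁ τ₃ ≤ trDist τ₁ τ₂ + trDist τ₂ τ₃ := by
  rw [trDist_eq_tsum, trDist_eq_tsum, trDist_eq_tsum,
    ← (summable_distWeight_mul_supDist hR τ₁ τ₂).tsum_add
      (summable_distWeight_mul_supDist hR τ₂ τ₃)]
  refine (summable_distWeight_mul_supDist hR τ₁ τ₃).tsum_le_tsum (fun q => ?_)
    ((summable_distWeight_mul_supDist hR τ₁ τ₂).add (summable_distWeight_mul_supDist hR τ₂ τ₃))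
  rw [← mul_add]
  exact mul_le_mul_of_nonneg_left (supDist_le_add τ₁ τ₂ τ₃ q) (distWeight_pos hR q).le

end Metric

section Completeness

variable {n : ℕ} {r : Fin (n + 1) → ℕ} {R : ℝ}

open TracialStateC

def TendstoUniformlyOnBoxes {ι : Type*} (F : ι → List (Letter n r × ℝ≥0) → ℂ)
    (L : List (Letter n r × ℝ≥0) → ℂ) (l : Filter ι) : Prop :=
  ∀ (m ℓ : ℕ) (ls : Fin (ℓ + 1) → Letter n r),
    TendstoUniformlyOn (fun a ts => F a (timedWord ls ts)) (fun ts => L (timedWord ls ts)) l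
      (univ.pi fun _ => Iic ((m : ℝ≥0) + 1))

theorem continuous_timedWord_of_tendstoUniformlyOnBoxes {ι : Type*} {l : Filter ι} [l.NeBot]
    {u : ι → TracialStateC n r R} {L : List (Letter n r × ℝ≥0) → ℂ}
    (h : TendstoUniformlyOnBoxes (fun a => (u a).tr) L l) :
    ∀ (ℓ : ℕ) (ls : Fin ℓ → Letter n r), Continuous fun ts => L (timedWord ls ts)
  | 0, _ => continuous_of_const fun _ _ => rfl
  | ℓ + 1, ls => continuous_of_tendstoUniformlyOn_Iic (fun a => (u a).moment_continuous _ ls)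
      fun m => h m ℓ ls

theorem tendsto_trDist_of_tendstoUniformlyOnBoxes (hR : 0 < R) {ι : Type*} {l : Filter ι}
    {u : ι → TracialStateC n r R} {τ : TracialStateC n r R}
    (h : TendstoUniformlyOnBoxes (fun a => (u a).tr) τ.tr l) :
    Tendsto (fun a => trDist (u a) τ) l (𝓝 0) := by
  have hsup (q : ℕ × ℕ) : Tendsto (fun a => supDist (u a) τ q) l (𝓝 0) := by
    refine Metric.tendsto_nhds.2 fun ε hε => ?_
    filter_upwards [eventually_all.2 fun ls =>
      Metric.tendstoUniformlyOn_iff.1 (h q.1 q.2 ls) (ε / 2) (half_pos hε)] with a ha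
    rw [Real.dist_0_eq_abs, abs_of_nonneg (supDist_nonneg _ _ _)]
    refine (supDist_le _ _ (half_pos hε).le fun ls ts hts => ?_).trans_lt (half_lt_self hε)
    rw [← dist_eq_norm, dist_comm]
    exact (ha ls ts (mem_univ_pi.2 hts)).le
  simpa only [trDist_eq_tsum, mul_zero, tsum_zero] using tendsto_tsum_of_dominated_convergence
    (f := fun a q => distWeight R q * supDist (u a) τ q) summable_half_pow_mul_half_pow
    (fun q => (hsup q).const_mul (distWeight R q)) (.of_forall fun a q => by
      rw [Real.norm_of_nonneg (distWeight_mul_supDist_nonneg hR _ _ q)]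
      exact distWeight_mul_supDist_le hR _ _ q)

theorem cauchySeq_tr (hR : 0 < R) {u : ℕ → TracialStateC n r R}
    (hu : ∀ ε : ℝ, 0 < ε → ∃ K : ℕ, ∀ a b : ℕ, K ≤ a → K ≤ b → trDist (u a) (u b) < ε)
    (w : List (Letter n r × ℝ≥0)) : CauchySeq fun a => (u a).tr w := by
  obtain ⟨c, hc, hle⟩ := exists_pos_mul_norm_sub_le_trDist hR w
  refine Metric.cauchySeq_iff.2 fun ε hε => ?_
  obtain ⟨K, hK⟩ := hu (c * ε) (mul_pos hc hε)
  refine ⟨K, fun a ha b hb => ?_⟩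
  rw [dist_eq_norm]
  exact lt_of_mul_lt_mul_left ((hle _ _).trans_lt (hK a b ha hb)) hc.le

theorem tendstoUniformlyOnBoxes_of_cauchy (hR : 0 < R) {u : ℕ → TracialStateC n r R}
    (hu : ∀ ε : ℝ, 0 < ε → ∃ K : ℕ, ∀ a b : ℕ, K ≤ a → K ≤ b → trDist (u a) (u b) < ε)
    {L : List (Letter n r × ℝ≥0) → ℂ} (hL : ∀ w, Tendsto (fun a => (u a).tr w) atTop (𝓝 (L w))) :
    TendstoUniformlyOnBoxes (fun a => (u a).tr) L atTop := by
  intro m ℓ ls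
  refine Metric.tendstoUniformlyOn_iff.2 fun ε hε => ?_
  have hwt := distWeight_pos hR (m, ℓ)
  obtain ⟨K, hK⟩ := hu (distWeight R (m, ℓ) * (ε / 2)) (by positivity)
  refine eventually_atTop.2 ⟨K, fun a ha ts hts => ?_⟩
  have hclose (b : ℕ) (hb : K ≤ b) :
      ‖(u b).tr (timedWord ls ts) - (u a).tr (timedWord ls ts)‖ ≤ ε / 2 :=
    le_of_mul_le_mul_left ((distWeight_mul_norm_sub_le_trDist hR _ _ ls ts
      fun k => mem_univ_pi.1 hts k).trans (hK b a hb ha).le) hwt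
  calc dist (L (timedWord ls ts)) ((u a).tr (timedWord ls ts))
      ≤ ε / 2 := by
        rw [dist_eq_norm]
        exact le_of_tendsto ((hL _).sub_const _).norm (eventually_atTop.2 ⟨K, hclose⟩)
    _ < ε := half_lt_self hε

theorem exists_tendsto_trDist_of_cauchy (hR : 0 < R) {u : ℕ → TracialStateC n r R}
    (hu : ∀ ε : ℝ, 0 < ε → ∃ K : ℕ, ∀ a b : ℕ, K ≤ a → K ≤ b → trDist (u a) (u b) < ε) :
    ∃ τ : TracialStateC n r R, Tendsto (fun a => trDist (u a) τ) atTop (𝓝 0) := by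
  choose L hL using fun w => cauchySeq_tendsto_of_complete (cauchySeq_tr hR hu w)
  have hunif := tendstoUniformlyOnBoxes_of_cauchy hR hu hL
  exact ⟨ofTendsto u L hL (continuous_timedWord_of_tendstoUniformlyOnBoxes hunif),
    tendsto_trDist_of_tendstoUniformlyOnBoxes hR hunif⟩

end Completeness

/-- Lemma 2.2(1): (TS^c(C*_R⟨x(·)⟩), d) is a complete metric space: d is a
metric, and every d-Cauchy sequence d-converges. -/
theorem trDist_complete_metric (n : ℕ) (r : Fin (n + 1) → ℕ) (R : ℝ)
    (hR : 0 < R) :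
    (∀ τ₁ τ₂ : TracialStateC n r R, 0 ≤ trDist τ₁ τ₂) ∧
    (∀ τ₁ τ₂ : TracialStateC n r R, trDist τ₁ τ₂ = 0 ↔ τ₁ = τ₂) ∧
    (∀ τ₁ τ₂ : TracialStateC n r R, trDist τ₁ τ₂ = trDist τ₂ τ₁) ∧
    (∀ τ₁ τ₂ τ₃ : TracialStateC n r R,
      trDist τ₁ τ₃ ≤ trDist τ₁ τ₂ + trDist τ₂ τ₃) ∧
    (∀ u : ℕ → TracialStateC n r R,
      (∀ ε : ℝ, 0 < ε → ∃ K : ℕ, ∀ a b : ℕ, K ≤ a → K ≤ b →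
        trDist (u a) (u b) < ε) →
      ∃ τ : TracialStateC n r R,
        Filter.Tendsto (fun a => trDist (u a) τ) Filter.atTop (nhds 0)) :=
  ⟨trDist_nonneg hR,
    fun _ _ => ⟨eq_of_trDist_eq_zero hR, fun h => h ▸ trDist_self _⟩,
    trDist_comm,
    trDist_triangle hR,
    fun _ hu => exists_tendsto_trDist_of_cauchy hR hu⟩
end

section
/- If I_{σ₀}^{lib}(τ) < +∞, then the marginal of τ at time 0 equals σ₀; moreover, in that case I_{σ₀}^{lib}(τ) = (1/2)·sup over T ≥ 0 and self-adjoint non-commutative polynomials P of (τ^T(P) − σ₀^{lib}(P))² / (Σ_{k=1}^n ∫₀^T ‖E_s^τ((D_s^{(k)}P)(x^{τ^s}(·), v^τ(·)))‖²_{τ,2} ds), with the convention 0/0 = 0 (i.e., whenever the denominator vanishes the numerator must also vanish). -/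
/-- Abstract form of Lemma 5.3 for the rate function I_{σ₀}^{lib}.
Here `P` stands for the real vector space of self-adjoint non-commutative
polynomials, `α T Q` stands for τ^T(Q) − σ₀^{lib}(Q) (linear in Q) and `β T Q`
stands for Σ_k ∫₀^T ‖E_s^τ((D_s^{(k)}Q)(x^{τ^s}(·), v^τ(·)))‖²_{τ,2} ds
(quadratic in Q, nonnegative, vanishing at T = 0).  If the rate function
I = sup_{T ≥ 0, Q} (α T Q − β T Q/2) is finite, then the time-0 marginal
coincides with σ₀ (i.e. α 0 ≡ 0), whenever the denominator β T Q vanishes the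
numerator α T Q vanishes too, and I = (1/2)·sup_{T ≥ 0, Q} (α T Q)²/(β T Q)
with the convention 0/0 = 0 (which is Lean's division). -/
theorem rate_function_quadratic_form {P : Type*} [AddCommGroup P] [Module ℝ P]
    (α β : ℝ → P → ℝ)
    (hαhom : ∀ (T : ℝ) (Q : P) (r : ℝ), α T (r • Q) = r * α T Q)
    (hβhom : ∀ (T : ℝ) (Q : P) (r : ℝ), β T (r • Q) = r ^ 2 * β T Q)
    (hβpos : ∀ (T : ℝ) (Q : P), 0 ≤ T → 0 ≤ β T Q)
    (hβ0 : ∀ Q : P, β 0 Q = 0)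
    (S : Set ℝ)
    (hS : S = {v | ∃ (T : ℝ) (Q : P), 0 ≤ T ∧ v = α T Q - β T Q / 2})
    (hbdd : BddAbove S) :
    (∀ Q : P, α 0 Q = 0) ∧
      (∀ (T : ℝ) (Q : P), 0 ≤ T → β T Q = 0 → α T Q = 0) ∧
      sSup S =
        (1 / 2) * sSup {v | ∃ (T : ℝ) (Q : P), 0 ≤ T ∧ v = α T Q ^ 2 / β T Q} := by
  set M := sSup S with hM
  -- membership bound
  have hmem : ∀ (T : ℝ) (Q : P), 0 ≤ T → α T Q - β T Q / 2 ≤ M := by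
    intro T Q hT
    exact le_csSup hbdd (hS ▸ ⟨T, Q, hT, rfl⟩)
  -- vanishing denominator forces vanishing numerator
  have key : ∀ (T : ℝ) (Q : P), 0 ≤ T → β T Q = 0 → α T Q = 0 := by
    intro T Q hT hβ
    by_contra hne
    have h := fun r : ℝ => hmem T (r • Q) hT
    have h' : ∀ r : ℝ, r * α T Q ≤ M := by
      intro r
      have := h r
      rw [hαhom, hβhom, hβ] at this
      linarith
    have := h' ((M + 1) / α T Q)
    rw [div_mul_cancel₀ _ hne] at this
    linarith
  have hα0 : ∀ Q : P, α 0 Q = 0 := fun Q => key 0 Q le_rfl (hβ0 Q)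
  refine ⟨hα0, key, ?_⟩
  have h0S : (0 : ℝ) ∈ S := by
    rw [hS]
    exact ⟨0, 0, le_rfl, by rw [hα0, hβ0]; ring⟩
  have hM0 : 0 ≤ M := le_csSup hbdd h0S
  set S' := {v | ∃ (T : ℝ) (Q : P), 0 ≤ T ∧ v = α T Q ^ 2 / β T Q} with hS'
  have h0S' : (0 : ℝ) ∈ S' := ⟨0, 0, le_rfl, by rw [hα0, hβ0]; simp⟩
  -- each element of S' is at most 2*M
  have hbound : ∀ v ∈ S', v ≤ 2 * M := by
    rintro v ⟨T, Q, hT, rfl⟩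
    rcases eq_or_lt_of_le (hβpos T Q hT) with hβz | hβp
    · rw [key T Q hT hβz.symm, ← hβz]
      simpa using hM0
    · have hw := hmem T ((α T Q / β T Q) • Q) hT
      rw [hαhom, hβhom] at hw
      have : α T Q ^ 2 / β T Q / 2 ≤ M := by
        have e : α T Q / β T Q * α T Q - (α T Q / β T Q) ^ 2 * β T Q / 2
            = α T Q ^ 2 / β T Q / 2 := by
          field_simp; ring
        linarith [e ▸ hw]
      linarith
  have hbdd' : BddAbove S' := ⟨2 * M, hbound⟩
  have hS'0 : 0 ≤ sSup S' := le_csSup hbdd' h0S'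
  refine le_antisymm ?_ ?_
  · -- sSup S ≤ (1/2) sSup S'
    apply csSup_le ⟨0, h0S⟩
    rintro v hv
    rw [hS] at hv
    obtain ⟨T, Q, hT, rfl⟩ := hv
    rcases eq_or_lt_of_le (hβpos T Q hT) with hβz | hβp
    · rw [key T Q hT hβz.symm, ← hβz]
      simpa using hS'0
    · have h1 : α T Q ^ 2 / β T Q ≤ sSup S' := le_csSup hbdd' ⟨T, Q, hT, rfl⟩
      have h2 : α T Q - β T Q / 2 ≤ α T Q ^ 2 / β T Q / 2 := by
        have e : α T Q ^ 2 / β T Q * β T Q = α T Q ^ 2 :=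
          div_mul_cancel₀ _ hβp.ne'
        nlinarith [sq_nonneg (α T Q - β T Q), hβp]
      linarith
  · -- (1/2) sSup S' ≤ sSup S
    have : sSup S' ≤ 2 * M := csSup_le ⟨0, h0S'⟩ hbound
    linarith
end
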